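/- For any simple graph G and any integer k ≥ 1, the matching numbers are log-concave: m_{k-1}(G) · m_{k+1}(G) ≤ m_k(G)^2, where m_k(G) is the number of matchings of G with exactly k edges. -/

import Mathlib

/-!
Group the pairs `(A, B)` of matchings by `(A ∩ B, A ∪ B)`. Within a group, `A \ B` and `B \ A`
split `S = A ∆ B` into two matchings, i.e. they are the colour classes of a 2-colouring of the
conflict graph of `S`, in which two edges of `S` are adjacent when they share a vertex. Every edge
of `S` meets at most two others, and a connected graph on `n` vertices has at least `n - 1` edges,
so the two colour classes of each component differ in size by at most one. A 2-colouring is fixed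
by choosing, for each component, which of its two classes goes into `A`; hence the number of
colourings with `#(A \ B) = j` is `2 ^ r * n.choose (j - c)` for some `r`, `n`, `c` with
`#S = 2 * c + n`. For sizes `(k - 1, k + 1)` we have `#S = 2 * j + 2`, and unimodality of the
binomial coefficients shows that the group contains at most as many pairs of sizes `(k - 1, k + 1)`
as of sizes `(k, k)`, where `j` becomes `j + 1`.
-/

/-- `matchingCount G k` is the number of `k`-matchings of `G`: sets of `k` edges of `G`
that are pairwise disjoint (no two share a vertex). -/
noncomputable def matchingCount {V : Type*} [Fintype V] (G : SimpleGraph V) (k : ℕ) : ℕ :=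
  Nat.card {M : Finset (Sym2 V) //
    (M : Set (Sym2 V)) ⊆ G.edgeSet ∧ M.card = k ∧
    ∀ e ∈ M, ∀ f ∈ M, e ≠ f → ∀ v : V, v ∈ e → v ∉ f}

open Finset
open scoped symmDiff Classical

namespace Finset

variable {α β ι : Type*}

theorem card_le_card_of_forall_card_fiber_le [DecidableEq β] {s t : Finset α} (f : α → β)
    (h : ∀ b ∈ s.image f, #{a ∈ s | f a = b} ≤ #{a ∈ t | f a = b}) : #s ≤ #t :=
  calc #s = ∑ b ∈ s.image f, #{a ∈ s | f a = b} := card_eq_sum_card_image f s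
    _ ≤ ∑ b ∈ s.image f, #{a ∈ t | f a = b} := sum_le_sum h
    _ = #{a ∈ t | f a ∈ s.image f} := sum_card_fiberwise_eq_card_filter _ _ _
    _ ≤ #t := card_filter_le _ _

theorem card_symmDiff_add_two_mul_card_inter [DecidableEq α] (s t : Finset α) :
    #(s ∆ t) + 2 * #(s ∩ t) = #s + #t := by
  have h₁ := card_sdiff_add_card_inter s t
  have h₂ := card_sdiff_add_card_inter t s
  rw [inter_comm] at h₂
  rw [symmDiff_def, sup_eq_union, card_union_of_disjoint disjoint_sdiff_sdiff]
  omega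

theorem symmDiff_eq_of_inter_eq_of_union_eq [DecidableEq α] {s t s' t' : Finset α}
    (hinter : s ∩ t = s' ∩ t') (hunion : s ∪ t = s' ∪ t') : s ∆ t = s' ∆ t' := by
  rw [symmDiff_eq_sup_sdiff_inf, symmDiff_eq_sup_sdiff_inf]
  exact congrArg₂ (· \ ·) hunion hinter

theorem card_inter_union_of_subset_symmDiff [DecidableEq α] {s t u : Finset α}
    (hu : u ⊆ s ∆ t) : #(s ∩ t ∪ u) = #(s ∩ t) + #u :=
  card_union_of_disjoint (disjoint_left.mpr fun a has hau => by
    have := mem_symmDiff.mp (hu hau)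
    simp_all)

variable [Fintype ι] [DecidableEq ι]

theorem card_filter_card_inter_eq (N : Finset ι) (k : ℕ) :
    #{U : Finset ι | #(U ∩ N) = k} = (#N).choose k * 2 ^ #Nᶜ := by
  rw [← card_powersetCard, ← card_powerset, ← card_product]
  refine card_nbij' (fun U => (U ∩ N, U \ N)) (fun p => p.1 ∪ p.2) ?_ ?_ ?_ ?_
  · intro U hU
    simp only [coe_filter, mem_univ, true_and, Set.mem_ofPred_eq] at hU
    simp only [coe_product, Set.mem_prod, mem_coe, mem_powersetCard, mem_powerset]
    exact ⟨⟨inter_subset_right, hU⟩, fun x hx => by simp_all⟩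
  · rintro ⟨A, B⟩ hp
    simp only [coe_product, Set.mem_prod, mem_coe, mem_powersetCard, mem_powerset] at hp
    obtain ⟨⟨hA, rfl⟩, hB⟩ := hp
    simp only [coe_filter, mem_univ, true_and, Set.mem_ofPred_eq]
    congr 1
    ext x
    have := @hA x
    have := @hB x
    simp only [mem_inter, mem_union, mem_compl] at *
    tauto
  · intro U _
    ext x
    simp only [mem_union, mem_inter, mem_sdiff]
    tauto
  · rintro ⟨A, B⟩ hp
    simp only [coe_product, Set.mem_prod, mem_coe, mem_powersetCard, mem_powerset] at hp
    obtain ⟨⟨hA, -⟩, hB⟩ := hp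
    ext x
    · have := @hA x; have := @hB x
      simp only [mem_inter, mem_union, mem_compl] at *; tauto
    · have := @hA x; have := @hB x
      simp only [mem_sdiff, mem_union, mem_compl] at *; tauto

theorem card_filter_sum_eq_le_succ (w : ι → ℤ) (hw : ∀ i, |w i| ≤ 1)
    {t : ℤ} (ht : 2 * t + 2 ≤ ∑ i, w i) :
    #{T : Finset ι | ∑ i ∈ T, w i = t} ≤ #{T : Finset ι | ∑ i ∈ T, w i = t + 1} := by
  have hw' : ∀ i, w i = -1 ∨ w i = 0 ∨ w i = 1 := fun i => by
    have := abs_le.mp (hw i)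
    omega
  set Q : Finset ι := {i | w i = -1}
  set N : Finset ι := {i | w i ≠ 0}
  -- flipping the negative indices turns the signed sum over `T` into a count
  have hflip : ∀ T : Finset ι, ∑ i ∈ T, w i + #Q = #((T ∆ Q) ∩ N) := by
    intro T
    have hTQN : (T ∆ Q) ∩ N = ({i | i ∈ T ∆ Q ∧ w i ≠ 0} : Finset ι) := by ext; simp [N]
    rw [hTQN, natCast_card_filter, natCast_card_filter, ← univ_inter T, ← sum_ite_mem,
      ← sum_add_distrib]
    refine sum_congr rfl fun i _ => ?_
    rcases hw' i with h | h | h <;> by_cases hi : i ∈ T <;> simp [h, hi, Q, mem_symmDiff]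
  have htotal : ∑ i, w i = #N - 2 * #Q := by
    simp only [N, Q, natCast_card_filter, mul_sum, ← sum_sub_distrib]
    refine sum_congr rfl fun i _ => ?_
    rcases hw' i with h | h | h <;> simp [h]
  have hcount : ∀ s : ℤ,
      #{T : Finset ι | ∑ i ∈ T, w i = s} = #{U : Finset ι | #(U ∩ N) = s + #Q} := by
    intro s
    refine card_nbij' (· ∆ Q) (· ∆ Q) ?_ ?_ ?_ ?_
    · intro T hT; simp_all [← hflip]
    · intro U hU
      have := hflip (U ∆ Q)
      rw [symmDiff_symmDiff_cancel_right] at this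
      simp only [coe_filter, mem_univ, true_and, Set.mem_ofPred_eq] at hU ⊢
      linarith
    · intro T _; exact symmDiff_symmDiff_cancel_right _ _
    · intro U _; exact symmDiff_symmDiff_cancel_right _ _
  rw [hcount, hcount]
  rcases lt_or_ge (t + #Q) 0 with hneg | hnn
  · have hempty : ∀ U : Finset ι, (#(U ∩ N) : ℤ) ≠ t + #Q := fun U => by omega
    simp [hempty]
  · obtain ⟨k, hk⟩ : ∃ k : ℕ, t + #Q = k := ⟨(t + #Q).toNat, (Int.toNat_of_nonneg hnn).symm⟩
    have hk' : t + 1 + #Q = ((k + 1 : ℕ) : ℤ) := by push_cast; omega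
    simp only [hk, hk', Nat.cast_inj, card_filter_card_inter_eq]
    gcongr
    exact Nat.choose_le_succ_of_lt_half_left (by omega)

end Finset

namespace SimpleGraph

variable {W : Type*} {H : SimpleGraph W}

theorem IsBipartiteWith.mem_iff_notMem_of_adj {Z : Finset W} (hZ : H.IsBipartiteWith ↑Z (↑Z)ᶜ)
    {v w : W} (h : H.Adj v w) : v ∈ Z ↔ w ∉ Z := by
  rcases hZ.mem_of_adj h with h | h <;> simp_all

theorem isBipartiteWith_compl_iff {Z : Finset W} :
    H.IsBipartiteWith ↑Z (↑Z)ᶜ ↔ ∀ ⦃v w⦄, H.Adj v w → (v ∈ Z ↔ w ∉ Z) := by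
  refine ⟨fun hZ _ _ h => hZ.mem_iff_notMem_of_adj h,
    fun h => ⟨disjoint_compl_right, fun v w hvw => ?_⟩⟩
  have := h hvw
  by_cases hv : v ∈ Z <;> simp_all

theorem Reachable.mem_iff_mem_iff {Z Z' : Finset W} (hZ : H.IsBipartiteWith ↑Z (↑Z)ᶜ)
    (hZ' : H.IsBipartiteWith ↑Z' (↑Z')ᶜ) {v w : W} (h : H.Reachable v w) :
    ((v ∈ Z ↔ v ∈ Z') ↔ (w ∈ Z ↔ w ∈ Z')) := by
  obtain ⟨p⟩ := h
  induction p with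
  | nil => exact Iff.rfl
  | cons hadj _ ih =>
    rw [← ih, hZ.mem_iff_notMem_of_adj hadj, hZ'.mem_iff_notMem_of_adj hadj]
    tauto

variable [Fintype W]

theorem Connected.card_le_two_mul_add_one (hH : H.Connected) {s : Finset W}
    (hs : H.IsBipartiteWith ↑s (↑s)ᶜ) (hdeg : ∀ v ∈ s, H.degree v ≤ 2) :
    Fintype.card W ≤ 2 * #s + 1 :=
  calc Fintype.card W ≤ Nat.card H.edgeSet + 1 := by
        simpa using hH.card_vert_le_card_edgeSet_add_one
    _ = ∑ v ∈ s, H.degree v + 1 := by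
        rw [isBipartiteWith_sum_degrees_eq_card_edges (t := sᶜ) (by rwa [coe_compl]),
          Nat.card_eq_fintype_card, edgeFinset_card]
    _ ≤ 2 * #s + 1 := by
        grw [sum_le_sum hdeg]
        simp [mul_comm]

variable (H) in
noncomputable def componentSupp (T : Finset H.ConnectedComponent) : Finset W :=
  {v | H.connectedComponentMk v ∈ T}

@[simp]
theorem mem_componentSupp {T : Finset H.ConnectedComponent} {v : W} :
    v ∈ H.componentSupp T ↔ H.connectedComponentMk v ∈ T := by
  simp [componentSupp]

variable (H) in
noncomputable def excess (Z : Finset W) (C : H.ConnectedComponent) : ℤ :=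
  #(C.supp.toFinset \ Z) - #(C.supp.toFinset ∩ Z)

theorem card_component_le_two_mul_add_one (hdeg : ∀ v, H.degree v ≤ 2) {Z : Finset W}
    (hZ : H.IsBipartiteWith ↑Z (↑Z)ᶜ) (C : H.ConnectedComponent) :
    #C.supp.toFinset ≤ 2 * #(C.supp.toFinset ∩ Z) + 1 := by
  have hbip : C.toSimpleGraph.IsBipartiteWith ↑(Z.subtype (· ∈ C))
      (↑(Z.subtype (· ∈ C)))ᶜ := by
    rw [isBipartiteWith_compl_iff]
    intro v w hvw
    simpa using hZ.mem_iff_notMem_of_adj hvw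
  have hdegC : ∀ v, C.toSimpleGraph.degree v ≤ 2 := fun v => by
    rw [← card_neighborFinset_eq_degree]
    refine le_trans ?_ ((card_neighborFinset_eq_degree H v).trans_le (hdeg v))
    refine card_le_card_of_injOn Subtype.val (fun w hw => ?_) Subtype.val_injective.injOn
    rw [mem_coe, mem_neighborFinset] at hw ⊢
    exact hw
  have := C.connected_toSimpleGraph.card_le_two_mul_add_one hbip (fun v _ => hdegC v)
  have hmem : ∀ v, v ∈ C ↔ H.connectedComponentMk v = C := fun _ => Iff.rfl
  have hZC : C.supp.toFinset ∩ Z = {v ∈ Z | H.connectedComponentMk v = C} := by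
    ext; simp [and_comm]
  simpa [Fintype.card_subtype, card_subtype, hmem, hZC] using this

theorem abs_excess_le_one (hdeg : ∀ v, H.degree v ≤ 2) {Z : Finset W}
    (hZ : H.IsBipartiteWith ↑Z (↑Z)ᶜ) (C : H.ConnectedComponent) : |H.excess Z C| ≤ 1 := by
  have hZc : H.IsBipartiteWith ↑Zᶜ (↑Zᶜ)ᶜ := by rw [coe_compl, compl_compl]; exact hZ.symm
  have h₁ := card_component_le_two_mul_add_one hdeg hZ C
  have h₂ := card_component_le_two_mul_add_one hdeg hZc C
  have h₃ := card_sdiff_add_card_inter C.supp.toFinset Z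
  rw [← sdiff_eq_inter_compl] at h₂
  rw [abs_le, excess]
  omega

theorem IsBipartiteWith.symmDiff_componentSupp {Z : Finset W} (hZ : H.IsBipartiteWith ↑Z (↑Z)ᶜ)
    (T : Finset H.ConnectedComponent) :
    H.IsBipartiteWith ↑(Z ∆ H.componentSupp T)
      (↑(Z ∆ H.componentSupp T))ᶜ := by
  rw [isBipartiteWith_compl_iff]
  intro v w hvw
  have := hZ.mem_iff_notMem_of_adj hvw
  simp only [mem_symmDiff, mem_componentSupp,
    ConnectedComponent.connectedComponentMk_eq_of_adj hvw]
  tauto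

theorem eq_symmDiff_componentSupp {Z Z' : Finset W} (hZ : H.IsBipartiteWith ↑Z (↑Z)ᶜ)
    (hZ' : H.IsBipartiteWith ↑Z' (↑Z')ᶜ) :
    Z' = Z ∆ H.componentSupp ((Z ∆ Z').image H.connectedComponentMk) := by
  have hcomp : ∀ v, H.connectedComponentMk v ∈ (Z ∆ Z').image H.connectedComponentMk ↔
      v ∈ Z ∆ Z' := fun v => by
    refine ⟨fun h => ?_, fun h => mem_image_of_mem _ h⟩
    obtain ⟨u, hu, huv⟩ := mem_image.mp h
    have := (ConnectedComponent.exact huv).mem_iff_mem_iff hZ hZ'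
    simp only [mem_symmDiff] at hu ⊢
    tauto
  ext v
  simp only [mem_symmDiff, mem_componentSupp, hcomp]
  tauto

theorem card_symmDiff_componentSupp (Z : Finset W) (T : Finset H.ConnectedComponent) :
    (#(Z ∆ H.componentSupp T) : ℤ) = #Z + ∑ C ∈ T, H.excess Z C := by
  set U : Finset W := H.componentSupp T
  have hfiber : ∀ Y : Finset W,
      #(Y ∩ U) = ∑ C ∈ T, #(C.supp.toFinset ∩ Y) := fun Y => by
    rw [card_eq_sum_card_fiberwise (f := H.connectedComponentMk) (t := T)
      (fun v hv => by simpa [U] using (mem_inter.mp hv).2)]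
    refine sum_congr rfl fun C hC => congrArg card ?_
    ext v
    simp only [U, mem_filter, mem_inter, mem_componentSupp, Set.mem_toFinset,
      ConnectedComponent.mem_supp_iff]
    constructor
    · rintro ⟨⟨hv, -⟩, rfl⟩; exact ⟨rfl, hv⟩
    · rintro ⟨rfl, hv⟩; exact ⟨⟨hv, hC⟩, rfl⟩
  have hsymm : #(Z ∆ U) = #(Z \ U) + #(Zᶜ ∩ U) := by
    rw [symmDiff_def, sup_eq_union, card_union_of_disjoint disjoint_sdiff_sdiff,
      sdiff_eq_inter_compl U, inter_comm]
  have hZ := card_sdiff_add_card_inter Z U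
  have hZc := hfiber Zᶜ
  simp only [← sdiff_eq_inter_compl] at hZc
  simp only [excess, sum_sub_distrib]
  rw [← Nat.cast_sum, ← Nat.cast_sum, ← hfiber Z, ← hZc, hsymm]
  omega

theorem card_isBipartiteWith_eq_card_sum_excess {Z : Finset W}
    (hZ : H.IsBipartiteWith ↑Z (↑Z)ᶜ) (j : ℕ) :
    #{Z' : Finset W | H.IsBipartiteWith ↑Z' (↑Z')ᶜ ∧ #Z' = j} =
      #{T : Finset H.ConnectedComponent | ∑ C ∈ T, H.excess Z C = j - #Z} := by
  refine card_nbij' (fun Z' => (Z ∆ Z').image H.connectedComponentMk)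
    (fun T => Z ∆ H.componentSupp T) ?_ ?_ ?_ ?_
  · intro Z' hZ'
    simp only [coe_filter, mem_univ, true_and, Set.mem_ofPred_eq] at hZ' ⊢
    have := card_symmDiff_componentSupp Z ((Z ∆ Z').image H.connectedComponentMk)
    rw [← eq_symmDiff_componentSupp hZ hZ'.1, hZ'.2] at this
    linarith
  · intro T hT
    simp only [coe_filter, mem_univ, true_and, Set.mem_ofPred_eq] at hT ⊢
    refine ⟨hZ.symmDiff_componentSupp T, ?_⟩
    have := card_symmDiff_componentSupp Z T
    omega
  · intro Z' hZ'
    simp only [coe_filter, mem_univ, true_and, Set.mem_ofPred_eq] at hZ'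
    exact (eq_symmDiff_componentSupp hZ hZ'.1).symm
  · intro T _
    ext C
    simp only [symmDiff_symmDiff_cancel_left, mem_image, mem_componentSupp]
    exact ⟨fun ⟨v, hv, hvC⟩ => hvC ▸ hv, fun hC => C.ind (fun v hv => ⟨v, hv, rfl⟩) hC⟩

theorem card_isBipartiteWith_le_succ (hdeg : ∀ v, H.degree v ≤ 2) {j : ℕ}
    (hj : 2 * j + 2 ≤ Fintype.card W) :
    #{Z : Finset W | H.IsBipartiteWith ↑Z (↑Z)ᶜ ∧ #Z = j} ≤
      #{Z : Finset W | H.IsBipartiteWith ↑Z (↑Z)ᶜ ∧ #Z = j + 1} := by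
  by_cases hbip : ¬∃ Z : Finset W, H.IsBipartiteWith ↑Z (↑Z)ᶜ
  · simp [not_exists.mp hbip]
  obtain ⟨Z, hZ⟩ := not_not.mp hbip
  rw [card_isBipartiteWith_eq_card_sum_excess hZ, card_isBipartiteWith_eq_card_sum_excess hZ]
  have htotal := card_symmDiff_componentSupp (H := H) Z univ
  have hcomp : Z ∆ H.componentSupp univ = Zᶜ := by ext; simp [mem_symmDiff]
  rw [hcomp, card_compl] at htotal
  push_cast
  rw [show (j : ℤ) + 1 - #Z = j - #Z + 1 by ring]
  refine Finset.card_filter_sum_eq_le_succ _ (abs_excess_le_one hdeg hZ) ?_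
  have := card_le_univ Z
  omega
end SimpleGraph

section

variable {V : Type*}

def IsMatching (M : Finset (Sym2 V)) : Prop :=
  ∀ e ∈ M, ∀ f ∈ M, e ≠ f → ∀ v : V, v ∈ e → v ∉ f

namespace IsMatching

variable {M N : Finset (Sym2 V)}

theorem mono (hM : IsMatching M) (h : N ⊆ M) : IsMatching N :=
  fun e he f hf => hM e (h he) f (h hf)

theorem eq_of_mem (hM : IsMatching M) {e f : Sym2 V} (he : e ∈ M) (hf : f ∈ M) {v : V}
    (hve : v ∈ e) (hvf : v ∈ f) : e = f :=
  by_contra fun h => hM e he f hf h v hve hvf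

theorem eq_or_eq_or_eq_of_mem_union {X Y : Finset (Sym2 V)} (hX : IsMatching X)
    (hY : IsMatching Y) {e f g : Sym2 V} (he : e ∈ X ∪ Y) (hf : f ∈ X ∪ Y) (hg : g ∈ X ∪ Y)
    {v : V} (hve : v ∈ e) (hvf : v ∈ f) (hvg : v ∈ g) : e = f ∨ e = g ∨ f = g := by
  rcases mem_union.mp he with he | he <;> rcases mem_union.mp hf with hf | hf <;>
    rcases mem_union.mp hg with hg | hg
  all_goals first
    | exact Or.inl (hX.eq_of_mem he hf hve hvf) | exact Or.inl (hY.eq_of_mem he hf hve hvf)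
    | exact Or.inr (Or.inl (hX.eq_of_mem he hg hve hvg))
    | exact Or.inr (Or.inl (hY.eq_of_mem he hg hve hvg))
    | exact Or.inr (Or.inr (hX.eq_of_mem hf hg hvf hvg))
    | exact Or.inr (Or.inr (hY.eq_of_mem hf hg hvf hvg))

theorem inter_union {A B : Finset (Sym2 V)} (hA : IsMatching A) (hB : IsMatching B)
    (hM : IsMatching M) (hMAB : M ⊆ A ∆ B) : IsMatching (A ∩ B ∪ M) := by
  have hsep : ∀ e ∈ A ∩ B, ∀ f ∈ M, ∀ v : V, v ∈ e → v ∉ f := by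
    intro e he f hf v hve hvf
    rw [mem_inter] at he
    have hf' := mem_symmDiff.mp (hMAB hf)
    have hef : e ≠ f := by rintro rfl; tauto
    rcases hf' with hf' | hf'
    · exact hA e he.1 f hf'.1 hef v hve hvf
    · exact hB e he.2 f hf'.1 hef v hve hvf
  intro e he f hf hef v hve hvf
  rcases mem_union.mp he with he | he <;> rcases mem_union.mp hf with hf | hf
  · exact hA e (mem_inter.mp he).1 f (mem_inter.mp hf).1 hef v hve hvf
  · exact hsep e he f hf v hve hvf
  · exact hsep f hf e he v hvf hve
  · exact hM e he f hf hef v hve hvf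

end IsMatching

def conflictGraph (S : Finset (Sym2 V)) : SimpleGraph S where
  Adj e f := e ≠ f ∧ ∃ v, v ∈ (e : Sym2 V) ∧ v ∈ (f : Sym2 V)
  symm := ⟨fun _ _ h => ⟨h.1.symm, h.2.imp fun _ hv => ⟨hv.2, hv.1⟩⟩⟩
  loopless := ⟨fun _ h => h.1 rfl⟩

theorem conflictGraph_adj {S : Finset (Sym2 V)} {e f : S} :
    (conflictGraph S).Adj e f ↔ e ≠ f ∧ ∃ v, v ∈ (e : Sym2 V) ∧ v ∈ (f : Sym2 V) :=
  Iff.rfl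

theorem isMatching_map_subtype_iff {S : Finset (Sym2 V)} {Y : Finset S} :
    IsMatching (Y.map (.subtype _)) ↔ ∀ e ∈ Y, ∀ f ∈ Y, ¬(conflictGraph S).Adj e f := by
  simp only [IsMatching, forall_mem_map, conflictGraph_adj, Function.Embedding.subtype_apply,
    ne_eq, Subtype.ext_iff, not_and, not_exists]

theorem conflictGraph_isBipartiteWith_iff {S : Finset (Sym2 V)} {Z : Finset S} :
    (conflictGraph S).IsBipartiteWith ↑Z (↑Z)ᶜ ↔
      IsMatching (Z.map (.subtype _)) ∧ IsMatching (S \ Z.map (.subtype _)) := by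
  have hcompl : S \ Z.map (.subtype _) = Zᶜ.map (.subtype _) := by
    ext e
    constructor
    · intro h
      obtain ⟨he, hZ⟩ := mem_sdiff.mp h
      exact mem_map.mpr ⟨⟨e, he⟩, mem_compl.mpr fun h => hZ (mem_map_of_mem _ h), rfl⟩
    · intro h
      obtain ⟨x, hx, rfl⟩ := mem_map.mp h
      exact mem_sdiff.mpr ⟨x.2, fun h' => mem_compl.mp hx ((mem_map' _).mp h')⟩
  rw [SimpleGraph.isBipartiteWith_compl_iff, hcompl, isMatching_map_subtype_iff,
    isMatching_map_subtype_iff]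
  refine ⟨fun h => ⟨fun e he f hf hef => (h hef).mp he hf,
    fun e he f hf hef => mem_compl.mp hf ((h hef).not_left.mp (mem_compl.mp he))⟩, ?_⟩
  rintro ⟨hZ, hZc⟩ e f hef
  by_cases he : e ∈ Z <;> by_cases hf : f ∈ Z
  · exact absurd hef (hZ e he f hf)
  · simp [he, hf]
  · simp [he, hf]
  · exact absurd hef (hZc e (mem_compl.mpr he) f (mem_compl.mpr hf))

theorem card_isBipartiteWith_conflictGraph (S : Finset (Sym2 V)) (j : ℕ) :
    #{Z : Finset S | (conflictGraph S).IsBipartiteWith ↑Z (↑Z)ᶜ ∧ #Z = j} =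
      #{Z ∈ S.powerset | IsMatching Z ∧ IsMatching (S \ Z) ∧ #Z = j} := by
  refine card_nbij' (·.map (.subtype _)) (·.subtype (· ∈ S)) ?_ ?_ ?_ ?_
  · intro Z hZ
    simp only [coe_filter, mem_univ, true_and, Set.mem_ofPred_eq,
      conflictGraph_isBipartiteWith_iff] at hZ
    simp only [coe_filter, mem_powerset, Set.mem_ofPred_eq, card_map]
    exact ⟨fun e he => property_of_mem_map_subtype Z he, hZ.1.1, hZ.1.2, hZ.2⟩
  · intro Z hZ
    simp only [coe_filter, mem_powerset, Set.mem_ofPred_eq] at hZ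
    simp only [coe_filter, mem_univ, true_and, Set.mem_ofPred_eq,
      conflictGraph_isBipartiteWith_iff, subtype_map, filter_true_of_mem hZ.1, card_subtype]
    exact ⟨⟨hZ.2.1, hZ.2.2.1⟩, hZ.2.2.2⟩
  · intro Z _
    ext
    simp
  · intro Z hZ
    exact subtype_map_of_mem (mem_powerset.mp (mem_filter.mp hZ).1)

theorem conflictGraph_degree_le_two {S X Y : Finset (Sym2 V)} (hS : S ⊆ X ∪ Y)
    (hX : IsMatching X) (hY : IsMatching Y) (e : S) : (conflictGraph S).degree e ≤ 2 := by
  let edgesAt (v : V) : Finset S := {f | f ≠ e ∧ v ∈ (f : Sym2 V)}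
  have hnbr : ∀ v ∈ (e : Sym2 V), #(edgesAt v) ≤ 1 := by
    intro v hve
    refine card_le_one.mpr fun f hf g hg => ?_
    simp only [edgesAt, mem_filter, mem_univ, true_and] at hf hg
    rcases hX.eq_or_eq_or_eq_of_mem_union hY (hS e.2) (hS f.2) (hS g.2) hve hf.2 hg.2 with
      h | h | h
    · exact absurd (Subtype.ext h).symm hf.1
    · exact absurd (Subtype.ext h).symm hg.1
    · exact Subtype.ext h
  obtain ⟨a, b, hab⟩ : ∃ a b, (e : Sym2 V) = s(a, b) :=
    Sym2.ind (fun a b => ⟨a, b, rfl⟩) (e : Sym2 V)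
  have hsub : (conflictGraph S).neighborFinset e ⊆ edgesAt a ∪ edgesAt b := by
    intro f hf
    obtain ⟨hef, v, hve, hvf⟩ :=
      conflictGraph_adj.mp ((SimpleGraph.mem_neighborFinset _ _ _).mp hf)
    rw [hab, Sym2.mem_iff] at hve
    rcases hve with rfl | rfl <;> simp [edgesAt, hvf, Ne.symm hef]
  rw [← SimpleGraph.card_neighborFinset_eq_degree]
  calc _ ≤ _ := card_le_card hsub
    _ ≤ _ := card_union_le _ _
    _ ≤ 1 + 1 := add_le_add (hnbr a (by simp [hab])) (hnbr b (by simp [hab]))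

end

section

variable {V : Type*} [Fintype V] (G : SimpleGraph V)

noncomputable def matchingFinset (k : ℕ) : Finset (Finset (Sym2 V)) :=
  {M | (M : Set (Sym2 V)) ⊆ G.edgeSet ∧ #M = k ∧ IsMatching M}

theorem mem_matchingFinset {k : ℕ} {M : Finset (Sym2 V)} :
    M ∈ matchingFinset G k ↔ (M : Set (Sym2 V)) ⊆ G.edgeSet ∧ #M = k ∧ IsMatching M := by
  simp [matchingFinset]

theorem matchingCount_eq_card (k : ℕ) : matchingCount G k = #(matchingFinset G k) := by
  rw [matchingCount, Nat.card_eq_fintype_card, Fintype.card_subtype]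
  exact congrArg card (filter_congr fun _ _ => Iff.rfl)

theorem card_matchingFinset_fiber {A₀ B₀ : Finset (Sym2 V)}
    (hA₀ : (A₀ : Set (Sym2 V)) ⊆ G.edgeSet) (hB₀ : (B₀ : Set (Sym2 V)) ⊆ G.edgeSet)
    (hA₀m : IsMatching A₀) (hB₀m : IsMatching B₀) {a b j : ℕ} (ha : a = #(A₀ ∩ B₀) + j)
    (hab : a + b = #A₀ + #B₀) :
    #{p ∈ matchingFinset G a ×ˢ matchingFinset G b |
        (p.1 ∩ p.2, p.1 ∪ p.2) = (A₀ ∩ B₀, A₀ ∪ B₀)} =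
      #{Z ∈ (A₀ ∆ B₀).powerset | IsMatching Z ∧ IsMatching (A₀ ∆ B₀ \ Z) ∧ #Z = j} := by
  have hcard := card_symmDiff_add_two_mul_card_inter A₀ B₀
  have hD : ((A₀ ∪ B₀ : Finset (Sym2 V)) : Set (Sym2 V)) ⊆ G.edgeSet := by
    rw [coe_union]
    exact Set.union_subset hA₀ hB₀
  have hedges : ∀ M ⊆ A₀ ∆ B₀, ((A₀ ∩ B₀ ∪ M : Finset (Sym2 V)) : Set (Sym2 V)) ⊆ G.edgeSet :=
    fun M hM => (coe_subset.mpr (union_subset (inter_subset_left.trans subset_union_left)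
      (hM.trans symmDiff_subset_union))).trans hD
  refine card_nbij' (fun p => p.1 \ p.2) (fun Z => (A₀ ∩ B₀ ∪ Z, A₀ ∩ B₀ ∪ (A₀ ∆ B₀ \ Z)))
    ?_ ?_ ?_ ?_
  · rintro ⟨A, B⟩ hp
    simp only [coe_filter, mem_product, mem_matchingFinset, Prod.mk.injEq, Set.mem_ofPred_eq,
      mem_powerset] at hp ⊢
    obtain ⟨⟨⟨-, hA, hAm⟩, -, -, hBm⟩, hI, hD⟩ := hp
    rw [← symmDiff_eq_of_inter_eq_of_union_eq hI hD]
    have hBA : A ∆ B \ (A \ B) = B \ A := by ext; simp [mem_symmDiff]; tauto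
    refine ⟨fun e he => mem_symmDiff.mpr (Or.inl (mem_sdiff.mp he)), hAm.mono sdiff_subset,
      hBA ▸ hBm.mono sdiff_subset, ?_⟩
    have := card_sdiff_add_card_inter A B
    rw [hI] at this
    omega
  · intro Z hZ
    simp only [coe_filter, mem_product, mem_matchingFinset, Prod.mk.injEq, Set.mem_ofPred_eq,
      mem_powerset] at hZ ⊢
    obtain ⟨hZS, hZm, hZcm, rfl⟩ := hZ
    have := card_sdiff_add_card_inter (A₀ ∆ B₀) Z
    rw [inter_eq_right.mpr hZS] at this
    refine ⟨⟨⟨hedges Z hZS, by rw [card_inter_union_of_subset_symmDiff hZS]; omega,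
      hA₀m.inter_union hB₀m hZm hZS⟩,
      hedges _ sdiff_subset, by rw [card_inter_union_of_subset_symmDiff sdiff_subset]; omega,
      hA₀m.inter_union hB₀m hZcm sdiff_subset⟩, ?_, ?_⟩
    all_goals
      ext e
      have := @hZS e
      simp only [mem_inter, mem_union, mem_sdiff, mem_symmDiff] at *
      tauto
  · rintro ⟨A, B⟩ hp
    simp only [coe_filter, mem_product, mem_matchingFinset, Prod.mk.injEq, Set.mem_ofPred_eq]
      at hp
    obtain ⟨-, hI, hD⟩ := hp
    rw [← symmDiff_eq_of_inter_eq_of_union_eq hI hD, ← hI]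
    simp only [Prod.mk.injEq]
    constructor <;> ext e <;> simp only [mem_inter, mem_union, mem_sdiff, mem_symmDiff] <;> tauto
  · intro Z hZ
    have hZS := mem_powerset.mp (mem_filter.mp hZ).1
    ext e
    have := @hZS e
    simp only [mem_inter, mem_union, mem_sdiff, mem_symmDiff] at *
    tauto

end

/-- Log-concavity of matching numbers (Heilmann–Lieb):
`m_{k-1}(G) ⋅ m_{k+1}(G) ≤ m_k(G)²` for any simple graph `G` and `k ≥ 1`. -/
theorem matching_log_concave {V : Type*} [Fintype V] (G : SimpleGraph V) (k : ℕ)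
    (hk : 1 ≤ k) :
    matchingCount G (k - 1) * matchingCount G (k + 1) ≤ matchingCount G k ^ 2 := by
  obtain ⟨m, rfl⟩ : ∃ m, k = m + 1 := ⟨k - 1, by omega⟩
  simp only [matchingCount_eq_card, Nat.add_sub_cancel, sq, ← card_product]
  refine card_le_card_of_forall_card_fiber_le (fun p => (p.1 ∩ p.2, p.1 ∪ p.2)) ?_
  simp only [mem_image, mem_product, mem_matchingFinset, Prod.exists]
  rintro _ ⟨A, B, ⟨⟨hAG, hA, hAm⟩, hBG, hB, hBm⟩, rfl⟩
  have hI : #(A ∩ B) ≤ m := hA ▸ card_le_card inter_subset_left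
  have hS := card_symmDiff_add_two_mul_card_inter A B
  rw [card_matchingFinset_fiber G hAG hBG hAm hBm (j := m - #(A ∩ B)) (by omega) (by omega),
    card_matchingFinset_fiber G hAG hBG hAm hBm (j := m - #(A ∩ B) + 1) (by omega) (by omega),
    ← card_isBipartiteWith_conflictGraph, ← card_isBipartiteWith_conflictGraph]
  exact SimpleGraph.card_isBipartiteWith_le_succ
    (conflictGraph_degree_le_two symmDiff_subset_union hAm hBm) (by rw [Fintype.card_coe]; omega)
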